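/- Let H be a bialgebra over a field k. H admits an antipode if and only if the map β' : H ⊗ H → H ⊗ H defined by β'(x ⊗ y) = (x ⊗ 1) · Δ(y) (i.e. β' = (μ ⊗ id) ∘ (id ⊗ Δ)) is bijective. -/

import Mathlib

/-!
`M ⊗ C` is the cofree right comodule over a coalgebra `C`, with coaction `id ⊗ Δ`. Every linear
map `f : N ⊗ C → M` lifts to the comodule map `cofreeLift f = (f ⊗ id) ∘ (id ⊗ Δ)`, lifts compose
by `cofreeLift f ∘ cofreeLift g = cofreeLift (f ∘ cofreeLift g)`, and `f` is recovered from its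
lift by applying `id ⊗ ε`. Here `β' = cofreeLift μ`, so for `S : H → H` the two composites of `β'`
with `cofreeLift (x ⊗ y ↦ x S(y))` are the identity exactly when `S` satisfies the two antipode
identities. Conversely the inverse of a bijective `β'` is again a comodule map and commutes with
left multiplication on the first factor, hence equals `cofreeLift (x ⊗ y ↦ x S(y))` for
`S(y) = (id ⊗ ε) (β'⁻¹ (1 ⊗ y))`.
-/

open Coalgebra TensorProduct

/-- `S : H →ₗ[k] H` is an antipode for the bialgebra `H`: a two-sided convolution
inverse of the identity map. -/
def IsAntipode (k H : Type*) [CommRing k] [Ring H] [Bialgebra k H] (S : H →ₗ[k] H) : Prop :=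
  LinearMap.mul' k H ∘ₗ S.rTensor H ∘ₗ (Coalgebra.comul : H →ₗ[k] H ⊗[k] H) =
      Algebra.linearMap k H ∘ₗ Coalgebra.counit ∧
    LinearMap.mul' k H ∘ₗ S.lTensor H ∘ₗ (Coalgebra.comul : H →ₗ[k] H ⊗[k] H) =
      Algebra.linearMap k H ∘ₗ Coalgebra.counit

/-- The map `β' = (μ ⊗ id) ∘ (id ⊗ Δ) : H ⊗ H → H ⊗ H`, `x ⊗ y ↦ (x ⊗ 1) · Δ(y)`. -/
noncomputable def hopfMap' (k H : Type*) [CommRing k] [Ring H] [Bialgebra k H] :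
    H ⊗[k] H →ₗ[k] H ⊗[k] H :=
  LinearMap.rTensor H (LinearMap.mul' k H) ∘ₗ
    (TensorProduct.assoc k H H H).symm.toLinearMap ∘ₗ
      LinearMap.lTensor H (Coalgebra.comul : H →ₗ[k] H ⊗[k] H)

open LinearMap

lemma TensorProduct.ext_of_comp_mk {R M N P : Type*} [CommSemiring R] [AddCommMonoid M]
    [Module R M] [AddCommMonoid N] [Module R N] [AddCommMonoid P] [Module R P]
    {F G : M ⊗[R] N →ₗ[R] P} (h : ∀ m, F ∘ₗ mk R M N m = G ∘ₗ mk R M N m) : F = G :=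
  TensorProduct.ext (LinearMap.ext h)

lemma LinearEquiv.symm_comp_eq_comp_symm_of_comp_eq {R M N M' N' : Type*} [Semiring R]
    [AddCommMonoid M] [Module R M] [AddCommMonoid N] [Module R N]
    [AddCommMonoid M'] [Module R M'] [AddCommMonoid N'] [Module R N']
    (e : M ≃ₗ[R] N) (e' : M' ≃ₗ[R] N') {u : M →ₗ[R] M'} {v : N →ₗ[R] N'}
    (h : e'.toLinearMap ∘ₗ u = v ∘ₗ e.toLinearMap) :
    e'.symm.toLinearMap ∘ₗ v = u ∘ₗ e.symm.toLinearMap := by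
  rw [LinearEquiv.toLinearMap_symm_comp_eq, ← comp_assoc, LinearEquiv.eq_comp_toLinearMap_symm, h]

section Cofree

variable {k C M N N' : Type*} [CommSemiring k] [AddCommMonoid C] [Module k C] [Coalgebra k C]
  [AddCommMonoid M] [Module k M] [AddCommMonoid N] [Module k N] [AddCommMonoid N'] [Module k N']

variable (k C M) in
noncomputable def cofreeCoaction : M ⊗[k] C →ₗ[k] (M ⊗[k] C) ⊗[k] C :=
  (TensorProduct.assoc k M C C).symm.toLinearMap ∘ₗ comul.lTensor M

variable (k C M) in
noncomputable def cofreeCounit : M ⊗[k] C →ₗ[k] M :=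
  (TensorProduct.rid k M).toLinearMap ∘ₗ counit.lTensor M

def IsCofreeComoduleHom (T : N ⊗[k] C →ₗ[k] M ⊗[k] C) : Prop :=
  cofreeCoaction k C M ∘ₗ T = T.rTensor C ∘ₗ cofreeCoaction k C N

noncomputable def cofreeLift (f : N ⊗[k] C →ₗ[k] M) : N ⊗[k] C →ₗ[k] M ⊗[k] C :=
  f.rTensor C ∘ₗ cofreeCoaction k C N

lemma cofreeCoaction_comp_mk (n : N) :
    cofreeCoaction k C N ∘ₗ mk k N C n = (mk k N C n).rTensor C ∘ₗ comul := by
  ext c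
  simp only [cofreeCoaction, coe_comp, Function.comp_apply, mk_apply, lTensor_tmul,
    LinearEquiv.coe_coe]
  induction comul (R := k) c using TensorProduct.induction_on with
  | zero => simp
  | tmul a b => simp
  | add s t hs ht => simp [tmul_add, hs, ht]

lemma cofreeCounit_comp_mk (n : N) :
    cofreeCounit k C N ∘ₗ mk k N C n = toSpanSingleton k N n ∘ₗ counit := by
  ext c
  simp [cofreeCounit]

lemma cofreeCoaction_comp_rTensor (u : N →ₗ[k] M) :
    cofreeCoaction k C M ∘ₗ u.rTensor C = (u.rTensor C).rTensor C ∘ₗ cofreeCoaction k C N := by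
  simp only [cofreeCoaction, coassoc_simps]

lemma cofreeCounit_comp_rTensor (u : N →ₗ[k] M) :
    cofreeCounit k C M ∘ₗ u.rTensor C = u ∘ₗ cofreeCounit k C N := by
  ext n c
  simp [cofreeCounit]

lemma cofreeCoaction_coassoc :
    cofreeCoaction k C (N ⊗[k] C) ∘ₗ cofreeCoaction k C N
      = (cofreeCoaction k C N).rTensor C ∘ₗ cofreeCoaction k C N := by
  refine TensorProduct.ext_of_comp_mk fun n => ?_
  calc cofreeCoaction k C (N ⊗[k] C) ∘ₗ cofreeCoaction k C N ∘ₗ mk k N C n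
      = ((mk k N C n).rTensor C).rTensor C ∘ₗ cofreeCoaction k C C ∘ₗ comul := by
        rw [cofreeCoaction_comp_mk, ← comp_assoc, cofreeCoaction_comp_rTensor, comp_assoc]
    _ = ((mk k N C n).rTensor C).rTensor C ∘ₗ comul.rTensor C ∘ₗ comul := by
        rw [cofreeCoaction, comp_assoc, coassoc_symm]
    _ = ((mk k N C n).rTensor C ∘ₗ comul).rTensor C ∘ₗ comul := by
        rw [rTensor_comp, comp_assoc]
    _ = (cofreeCoaction k C N).rTensor C ∘ₗ cofreeCoaction k C N ∘ₗ mk k N C n := by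
        rw [cofreeCoaction_comp_mk, ← comp_assoc, ← rTensor_comp, cofreeCoaction_comp_mk]

lemma isCofreeComoduleHom_cofreeLift (f : N ⊗[k] C →ₗ[k] M) :
    IsCofreeComoduleHom (cofreeLift f) := by
  rw [IsCofreeComoduleHom, cofreeLift, ← comp_assoc, cofreeCoaction_comp_rTensor, comp_assoc,
    cofreeCoaction_coassoc, ← comp_assoc, ← rTensor_comp]

lemma cofreeLift_comp {T : N' ⊗[k] C →ₗ[k] N ⊗[k] C} (hT : IsCofreeComoduleHom T)
    (f : N ⊗[k] C →ₗ[k] M) : cofreeLift (f ∘ₗ T) = cofreeLift f ∘ₗ T := by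
  rw [cofreeLift, cofreeLift, rTensor_comp, comp_assoc, ← hT, comp_assoc]

lemma cofreeLift_comp_cofreeLift (f : N ⊗[k] C →ₗ[k] M) (g : N' ⊗[k] C →ₗ[k] N) :
    cofreeLift f ∘ₗ cofreeLift g = cofreeLift (f ∘ₗ cofreeLift g) :=
  (cofreeLift_comp (isCofreeComoduleHom_cofreeLift g) f).symm

lemma cofreeLift_comp_rTensor (f : N ⊗[k] C →ₗ[k] M) (u : N' →ₗ[k] N) :
    cofreeLift f ∘ₗ u.rTensor C = cofreeLift (f ∘ₗ u.rTensor C) := by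
  rw [cofreeLift, cofreeLift, comp_assoc, cofreeCoaction_comp_rTensor, rTensor_comp, comp_assoc]

lemma rTensor_comp_cofreeLift (u : M →ₗ[k] N') (f : N ⊗[k] C →ₗ[k] M) :
    u.rTensor C ∘ₗ cofreeLift f = cofreeLift (u ∘ₗ f) := by
  rw [cofreeLift, cofreeLift, rTensor_comp, comp_assoc]

lemma cofreeCounit_comp_cofreeLift (f : N ⊗[k] C →ₗ[k] M) :
    cofreeCounit k C M ∘ₗ cofreeLift f = f := by
  refine TensorProduct.ext_of_comp_mk fun n => ?_
  calc (cofreeCounit k C M ∘ₗ cofreeLift f) ∘ₗ mk k N C n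
      = cofreeCounit k C M ∘ₗ (f ∘ₗ mk k N C n).rTensor C ∘ₗ comul := by
        rw [cofreeLift, comp_assoc, comp_assoc, cofreeCoaction_comp_mk, ← comp_assoc (f := comul),
          ← rTensor_comp]
    _ = (f ∘ₗ mk k N C n) ∘ₗ
          (TensorProduct.rid k C).toLinearMap ∘ₗ counit.lTensor C ∘ₗ comul := by
        rw [← comp_assoc, cofreeCounit_comp_rTensor, cofreeCounit]
        simp only [comp_assoc]
    _ = f ∘ₗ mk k N C n := by
        rw [lTensor_counit_comp_comul]
        ext c
        simp

lemma cofreeLift_cofreeCounit : cofreeLift (cofreeCounit k C M) = LinearMap.id := by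
  refine TensorProduct.ext_of_comp_mk fun n => ?_
  rw [cofreeLift, comp_assoc, cofreeCoaction_comp_mk, ← comp_assoc, ← rTensor_comp,
    cofreeCounit_comp_mk, rTensor_comp, comp_assoc, rTensor_counit_comp_comul]
  ext c
  simp

lemma cofreeLift_injective : Function.Injective (cofreeLift (k := k) (C := C) (N := N) (M := M)) :=
  fun f g h => by rw [← cofreeCounit_comp_cofreeLift f, h, cofreeCounit_comp_cofreeLift]

lemma IsCofreeComoduleHom.symm {e : N ⊗[k] C ≃ₗ[k] M ⊗[k] C}
    (he : IsCofreeComoduleHom e.toLinearMap) : IsCofreeComoduleHom e.symm.toLinearMap := by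
  have := LinearEquiv.symm_comp_eq_comp_symm_of_comp_eq e (LinearEquiv.rTensor C e) (Eq.symm he)
  rw [IsCofreeComoduleHom, ← this]
  rfl

end Cofree

section Algebra

variable {k H N : Type*} [CommSemiring k] [Semiring H] [Algebra k H] [AddCommMonoid N] [Module k N]

lemma mul'_comp_rTensor_mulLeft (a : H) :
    mul' k H ∘ₗ (mulLeft k a).rTensor H = mulLeft k a ∘ₗ mul' k H := by
  ext x y
  simp [mul_assoc]

lemma eq_mul'_comp_lTensor {F : H ⊗[k] N →ₗ[k] H}
    (hF : ∀ a, F ∘ₗ (mulLeft k a).rTensor N = mulLeft k a ∘ₗ F) :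
    F = mul' k H ∘ₗ (F ∘ₗ mk k H N 1).lTensor H := by
  ext x y
  simpa using LinearMap.congr_fun (hF x) (1 ⊗ₜ y)

lemma mul'_comp_lTensor_injective :
    Function.Injective fun A : N →ₗ[k] H => mul' k H ∘ₗ A.lTensor H := by
  intro A B h
  ext y
  simpa using LinearMap.congr_fun h (1 ⊗ₜ y)

end Algebra

section Bialgebra

variable {k H : Type*} [CommRing k] [Ring H] [Bialgebra k H]

lemma hopfMap'_eq_cofreeLift : hopfMap' k H = cofreeLift (mul' k H) := rfl

lemma hopfMap'_comp_rTensor_mulLeft (a : H) :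
    hopfMap' k H ∘ₗ (mulLeft k a).rTensor H = (mulLeft k a).rTensor H ∘ₗ hopfMap' k H := by
  rw [hopfMap'_eq_cofreeLift, cofreeLift_comp_rTensor, mul'_comp_rTensor_mulLeft,
    rTensor_comp_cofreeLift]

lemma cofreeCounit_eq_mul'_comp_lTensor :
    cofreeCounit k H H = mul' k H ∘ₗ (Algebra.linearMap k H ∘ₗ counit).lTensor H := by
  ext x y
  simp [cofreeCounit, Algebra.smul_def, Algebra.commutes]

lemma mul'_comp_cofreeLift_mul'_lTensor (S : H →ₗ[k] H) :
    mul' k H ∘ₗ cofreeLift (mul' k H ∘ₗ S.lTensor H)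
      = mul' k H ∘ₗ (mul' k H ∘ₗ S.rTensor H ∘ₗ comul).lTensor H := by
  have hassoc : mul' k H ∘ₗ (mul' k H ∘ₗ S.lTensor H).rTensor H ∘ₗ
      (TensorProduct.assoc k H H H).symm.toLinearMap =
        mul' k H ∘ₗ (mul' k H ∘ₗ S.rTensor H).lTensor H := by
    ext x a b
    simp [mul_assoc]
  rw [cofreeLift, cofreeCoaction, ← comp_assoc, ← comp_assoc, comp_assoc (h := mul' k H), hassoc]
  simp only [comp_assoc, lTensor_comp]

lemma mul'_lTensor_comp_hopfMap' (S : H →ₗ[k] H) :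
    (mul' k H ∘ₗ S.lTensor H) ∘ₗ hopfMap' k H
      = mul' k H ∘ₗ (mul' k H ∘ₗ S.lTensor H ∘ₗ comul).lTensor H := by
  have hassoc : (mul' k H ∘ₗ S.lTensor H) ∘ₗ (mul' k H).rTensor H ∘ₗ
      (TensorProduct.assoc k H H H).symm.toLinearMap =
        mul' k H ∘ₗ (mul' k H ∘ₗ S.lTensor H).lTensor H := by
    ext x a b
    simp [mul_assoc]
  simp only [hopfMap', ← comp_assoc] at hassoc ⊢
  rw [hassoc]
  simp only [comp_assoc, lTensor_comp]

lemma hopfMap'_comp_cofreeLift_eq_id_iff (S : H →ₗ[k] H) :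
    hopfMap' k H ∘ₗ cofreeLift (mul' k H ∘ₗ S.lTensor H) = LinearMap.id ↔
      mul' k H ∘ₗ S.rTensor H ∘ₗ comul = Algebra.linearMap k H ∘ₗ counit := by
  rw [hopfMap'_eq_cofreeLift, cofreeLift_comp_cofreeLift, ← cofreeLift_cofreeCounit,
    cofreeLift_injective.eq_iff, mul'_comp_cofreeLift_mul'_lTensor,
    cofreeCounit_eq_mul'_comp_lTensor, mul'_comp_lTensor_injective.eq_iff]

lemma cofreeLift_comp_hopfMap'_eq_id_iff (S : H →ₗ[k] H) :
    cofreeLift (mul' k H ∘ₗ S.lTensor H) ∘ₗ hopfMap' k H = LinearMap.id ↔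
      mul' k H ∘ₗ S.lTensor H ∘ₗ comul = Algebra.linearMap k H ∘ₗ counit := by
  rw [hopfMap'_eq_cofreeLift, cofreeLift_comp_cofreeLift, ← cofreeLift_cofreeCounit,
    cofreeLift_injective.eq_iff, ← hopfMap'_eq_cofreeLift, mul'_lTensor_comp_hopfMap',
    cofreeCounit_eq_mul'_comp_lTensor, mul'_comp_lTensor_injective.eq_iff]

lemma isAntipode_iff (S : H →ₗ[k] H) :
    IsAntipode k H S ↔
      hopfMap' k H ∘ₗ cofreeLift (mul' k H ∘ₗ S.lTensor H) = LinearMap.id ∧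
        cofreeLift (mul' k H ∘ₗ S.lTensor H) ∘ₗ hopfMap' k H = LinearMap.id := by
  rw [hopfMap'_comp_cofreeLift_eq_id_iff, cofreeLift_comp_hopfMap'_eq_id_iff, IsAntipode]

lemma exists_cofreeLift_eq_symm (e : (H ⊗[k] H) ≃ₗ[k] H ⊗[k] H)
    (he : e.toLinearMap = hopfMap' k H) :
    ∃ S : H →ₗ[k] H, cofreeLift (mul' k H ∘ₗ S.lTensor H) = e.symm.toLinearMap := by
  have hcomod : IsCofreeComoduleHom e.symm.toLinearMap :=
    IsCofreeComoduleHom.symm (he ▸ isCofreeComoduleHom_cofreeLift _)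
  have hlin (a : H) : e.symm.toLinearMap ∘ₗ (mulLeft k a).rTensor H
      = (mulLeft k a).rTensor H ∘ₗ e.symm.toLinearMap :=
    LinearEquiv.symm_comp_eq_comp_symm_of_comp_eq e e (he ▸ hopfMap'_comp_rTensor_mulLeft a)
  refine ⟨(cofreeCounit k H H ∘ₗ e.symm.toLinearMap) ∘ₗ mk k H H 1, ?_⟩
  rw [← eq_mul'_comp_lTensor, cofreeLift_comp hcomod, cofreeLift_cofreeCounit, id_comp]
  intro a
  rw [comp_assoc, hlin, ← comp_assoc, cofreeCounit_comp_rTensor, comp_assoc]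

end Bialgebra

/-- A bialgebra over a field admits an antipode iff the map
`β'(x ⊗ y) = (x ⊗ 1) · Δ(y)` is bijective. -/
theorem exists_antipode_iff_hopfMap'_bijective (k H : Type*) [Field k] [Ring H]
    [Bialgebra k H] :
    (∃ S : H →ₗ[k] H, IsAntipode k H S) ↔ Function.Bijective (hopfMap' k H) := by
  constructor
  · rintro ⟨S, hS⟩
    obtain ⟨hright, hleft⟩ := (isAntipode_iff S).1 hS
    exact (LinearEquiv.ofLinearMap _ _ hright hleft : (H ⊗[k] H) ≃ₗ[k] H ⊗[k] H).bijective
  · intro hβ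
    let e := LinearEquiv.ofBijective (hopfMap' k H) hβ
    obtain ⟨S, hS⟩ := exists_cofreeLift_eq_symm e rfl
    refine ⟨S, (isAntipode_iff S).2 ⟨?_, ?_⟩⟩
    · rw [hS]; exact e.comp_symm
    · rw [hS]; exact e.symm_comp
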